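/- arXiv:2407.08549 — 3 statements merged into one kernel-verified Lean document; each statement's English description precedes it below -/
import Mathlib

section
/- For n ≥ 5 odd and m = (n-3)/2, the exponent max{2(n²+2n-2)/(n²-1), 2(n-m)/(n-m-1)} is strictly smaller than the Hickman–Iliopoulou exponent 2(3n-2m+1)/(3n-2m-3). -/
/-! With `n = 2m + 3` both sides become perturbations of the trivial exponent `2`: the
Hickman–Iliopoulou exponent is `2 + 4/n`, the exponent `2(n-m)/(n-m-1)` is `2 + 4/(n+1)`, and
`2(n²+2n-2)/(n²-1) = 2 + 2(2n-1)/(n²-1)`, which is below `2 + 4/n` because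
`2n(2n-1) < 4(n²-1)` as soon as `n > 2`. -/

section ExponentArithmetic

variable {K : Type*} [Field K] [LinearOrder K] [IsStrictOrderedRing K]

theorem hickmanIliopoulou_exponent_eq {n m : K} (hnm : n = 2 * m + 3) (hn : n ≠ 0) :
    2 * (3 * n - 2 * m + 1) / (3 * n - 2 * m - 3) = 2 + 4 / n := by
  have hnum : 3 * n - 2 * m + 1 = 2 * (n + 2) := by linarith
  have hden : 3 * n - 2 * m - 3 = 2 * n := by linarith
  rw [hnum, hden]
  field_simp
  ring

theorem two_mul_sub_div_sub_sub_one_eq {n m : K} (hnm : n = 2 * m + 3) (hn : n + 1 ≠ 0) :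
    2 * (n - m) / (n - m - 1) = 2 + 4 / (n + 1) := by
  have hnum : n - m = (n + 3) / 2 := by linarith
  have hden : n - m - 1 = (n + 1) / 2 := by linarith
  rw [hden, hnum]
  field_simp
  ring

theorem two_mul_sq_add_two_mul_sub_two_div_lt {n : K} (hn : 2 < n) :
    2 * (n ^ 2 + 2 * n - 2) / (n ^ 2 - 1) < 2 + 4 / n := by
  have hn0 : 0 < n := by linarith
  calc 2 * (n ^ 2 + 2 * n - 2) / (n ^ 2 - 1) < 2 * (n + 2) / n := by
        rw [div_lt_div_iff₀ (by nlinarith) hn0]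
        nlinarith
    _ = 2 + 4 / n := by field_simp; ring

end ExponentArithmetic

theorem exponent_improves_HI_general (n m : ℕ) (hodd : n = 2 * m + 3) :
    max ((2 * ((n : ℚ) ^ 2 + 2 * n - 2)) / ((n : ℚ) ^ 2 - 1))
        ((2 * ((n : ℚ) - m)) / ((n : ℚ) - m - 1))
      < (2 * (3 * (n : ℚ) - 2 * m + 1)) / (3 * (n : ℚ) - 2 * m - 3) := by
  have hnm : (n : ℚ) = 2 * m + 3 := by exact_mod_cast hodd
  have hn : (2 : ℚ) < n := by rw [hnm]; linarith [m.cast_nonneg (α := ℚ)]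
  have hn0 : (0 : ℚ) < n := by linarith
  rw [hickmanIliopoulou_exponent_eq hnm hn0.ne', two_mul_sub_div_sub_sub_one_eq hnm (by linarith)]
  refine max_lt (two_mul_sq_add_two_mul_sub_two_div_lt hn) ?_
  gcongr
  linarith

/-- For `n ≥ 5` odd and `m = (n-3)/2` (encoded as `n = 2*m + 3`), the exponent
`max {2(n²+2n-2)/(n²-1), 2(n-m)/(n-m-1)}` is strictly smaller than the
Hickman–Iliopoulou exponent `2(3n-2m+1)/(3n-2m-3)`, as rational numbers. -/
theorem exponent_improves_HI (n m : ℕ) (hn : 5 ≤ n) (hodd : n = 2 * m + 3) :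
    max ((2 * ((n : ℚ) ^ 2 + 2 * n - 2)) / ((n : ℚ) ^ 2 - 1))
        ((2 * ((n : ℚ) - m)) / ((n : ℚ) - m - 1))
      < (2 * (3 * (n : ℚ) - 2 * m + 1)) / (3 * (n : ℚ) - 2 * m - 3) :=
  exponent_improves_HI_general n m hodd
end

section
/- The broad norm satisfies a Hölder-type inequality: if 1 ≤ p, p₁, p₂ < ∞, α₁ + α₂ = 1 with α₁, α₂ ∈ [0,1], 1/p = α₁/p₁ + α₂/p₂, and A = A₁ + A₂, then ‖E f‖_{HL^p_A(U)} ≤ ‖E f‖_{HL^{p₁}_{A₁}(U)}^{α₁} · ‖E f‖_{HL^{p₂}_{A₂}(U)}^{α₂}. -/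
/-!
On each ball, take a family of `A₁` subspaces nearly minimising the `p₁`-broad quantity and a
family of `A₂` subspaces nearly minimising the `p₂`-one. Their concatenation is an admissible
family of `A₁ + A₂` subspaces, and a cap far from it is far from both, so the per-cap Hölder
bound, raised to the power `p`, bounds the `p`-broad quantity by the two maxima with weights
`θᵢ = p αᵢ / pᵢ`; these add up to `1` precisely because `1/p = α₁/p₁ + α₂/p₂`. Summing over
the balls with the discrete Hölder inequality for the weights `θ₁, θ₂` finishes the proof.
-/

open scoped BigOperators

/-- The broad quantity on a single ball `B`: the minimum over choices of `A` affine
subspaces (abstracted as elements of a type `V`, with `near τ W` meaning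
`dist(τ, W) ≤ K₁⁻¹`) of the maximum of `(b τ)^p` over caps `τ` far from every `V_s`. -/
noncomputable def broadMass {T V : Type} [Fintype T] (near : T → V → Prop)
    (A : ℕ) (p : ℝ) (b : T → ℝ) : ℝ :=
  ⨅ Vs : Fin A → V, ⨆ τ : {τ : T // ∀ s, ¬ near τ (Vs s)}, (b τ.1) ^ p

open Set Real

theorem le_map_ciInf_ciInf {α β ι κ : Type*}
    [ConditionallyCompleteLinearOrder α] [TopologicalSpace α] [OrderTopology α]
    [TopologicalSpace β] [Preorder β] [OrderClosedTopology β] [Nonempty ι] [Nonempty κ]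
    {f : ι → α} {g : κ → α} (hf : BddBelow (range f)) (hg : BddBelow (range g))
    {φ : α → α → β} (hφ : Continuous (Function.uncurry φ)) {L : β}
    (h : ∀ i j, L ≤ φ (f i) (g j)) :
    L ≤ φ (⨅ i, f i) (⨅ j, g j) := by
  have hclosed : IsClosed {z : α × α | L ≤ Function.uncurry φ z} :=
    isClosed_le continuous_const hφ
  have hsub : range f ×ˢ range g ⊆ {z | L ≤ Function.uncurry φ z} := by
    rintro ⟨_, _⟩ ⟨⟨i, rfl⟩, ⟨j, rfl⟩⟩
    exact h i j
  have hmem : (⨅ i, f i, ⨅ j, g j) ∈ closure (range f ×ˢ range g) := by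
    rw [closure_prod_eq]
    exact ⟨csInf_mem_closure (range_nonempty f) hf, csInf_mem_closure (range_nonempty g) hg⟩
  exact hclosed.closure_subset_iff.mpr hsub hmem

theorem Finset.sum_rpow_mul_rpow_le {ι : Type*} (s : Finset ι) {a b : ι → ℝ}
    (ha : ∀ i ∈ s, 0 ≤ a i) (hb : ∀ i ∈ s, 0 ≤ b i) {θ₁ θ₂ : ℝ} (hθ₁ : 0 ≤ θ₁) (hθ₂ : 0 ≤ θ₂)
    (hθ : θ₁ + θ₂ = 1) :
    ∑ i ∈ s, a i ^ θ₁ * b i ^ θ₂ ≤ (∑ i ∈ s, a i) ^ θ₁ * (∑ i ∈ s, b i) ^ θ₂ := by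
  rcases hθ₁.eq_or_lt with rfl | hθ₁
  · obtain rfl : θ₂ = 1 := by linarith
    simp
  rcases hθ₂.eq_or_lt with rfl | hθ₂
  · obtain rfl : θ₁ = 1 := by linarith
    simp
  have hroot {c : ι → ℝ} {θ : ℝ} (hc : ∀ i ∈ s, 0 ≤ c i) (hθ : 0 < θ) :
      ∑ i ∈ s, (c i ^ θ) ^ θ⁻¹ = ∑ i ∈ s, c i :=
    Finset.sum_congr rfl fun i hi => rpow_rpow_inv (hc i hi) hθ.ne'
  have holder := inner_le_Lp_mul_Lq_of_nonneg s (.inv_inv hθ₁ hθ₂ hθ)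
    (fun i hi => rpow_nonneg (ha i hi) θ₁) (fun i hi => rpow_nonneg (hb i hi) θ₂)
  simp only [hroot ha hθ₁, hroot hb hθ₂, one_div, inv_inv] at holder
  exact holder

theorem rpow_le_rpow_mul_rpow_of_le {x y z a b r c d e f : ℝ} (hx : 0 ≤ x) (hy : 0 ≤ y)
    (hz : 0 ≤ z) (hr : 0 ≤ r) (h : x ≤ y ^ a * z ^ b) (hac : a * r = c * d)
    (hbe : b * r = e * f) :
    x ^ r ≤ (y ^ c) ^ d * (z ^ e) ^ f := by
  calc x ^ r ≤ (y ^ a * z ^ b) ^ r := rpow_le_rpow hx h hr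
    _ = (y ^ c) ^ d * (z ^ e) ^ f := by
      rw [mul_rpow (rpow_nonneg hy a) (rpow_nonneg hz b), ← rpow_mul hy, ← rpow_mul hz,
        ← rpow_mul hy, ← rpow_mul hz, hac, hbe]

section BroadMass

variable {T V : Type} (near : T → V → Prop)

-- `broadMass near A p b` is, by definition, `⨅ Vs, farSup near p b Vs`.
noncomputable def farSup {A : ℕ} (p : ℝ) (b : T → ℝ) (Vs : Fin A → V) : ℝ :=
  ⨆ τ : {τ : T // ∀ s, ¬ near τ (Vs s)}, (b τ.1) ^ p

variable {near} {p : ℝ} {b : T → ℝ}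

theorem farSup_nonneg (hb : ∀ τ, 0 ≤ b τ) {A : ℕ} (Vs : Fin A → V) :
    0 ≤ farSup near p b Vs :=
  Real.iSup_nonneg fun τ => rpow_nonneg (hb τ.1) p

theorem bddBelow_range_farSup (hb : ∀ τ, 0 ≤ b τ) (A : ℕ) :
    BddBelow (range (farSup near p b : (Fin A → V) → ℝ)) :=
  ⟨0, by rintro _ ⟨Vs, rfl⟩; exact farSup_nonneg hb Vs⟩

variable [Fintype T]

theorem rpow_le_farSup {A : ℕ} {Vs : Fin A → V} {τ : T} (hτ : ∀ s, ¬ near τ (Vs s)) :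
    b τ ^ p ≤ farSup near p b Vs :=
  le_ciSup (f := fun τ : {τ : T // ∀ s, ¬ near τ (Vs s)} => b τ.1 ^ p)
    (finite_range _).bddAbove ⟨τ, hτ⟩

theorem broadMass_nonneg (hb : ∀ τ, 0 ≤ b τ) (A : ℕ) : 0 ≤ broadMass near A p b :=
  Real.iInf_nonneg fun Vs => farSup_nonneg hb Vs

theorem broadMass_le_farSup (hb : ∀ τ, 0 ≤ b τ) {A : ℕ} (Vs : Fin A → V) :
    broadMass near A p b ≤ farSup near p b Vs :=
  ciInf_le (bddBelow_range_farSup hb A) Vs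

variable {p₁ p₂ θ₁ θ₂ : ℝ} {b₁ b₂ : T → ℝ}

theorem farSup_append_le (hb₁ : ∀ τ, 0 ≤ b₁ τ) (hb₂ : ∀ τ, 0 ≤ b₂ τ) (hθ₁ : 0 ≤ θ₁)
    (hθ₂ : 0 ≤ θ₂) (hpt : ∀ τ, b τ ^ p ≤ (b₁ τ ^ p₁) ^ θ₁ * (b₂ τ ^ p₂) ^ θ₂)
    {A₁ A₂ : ℕ} (W₁ : Fin A₁ → V) (W₂ : Fin A₂ → V) :
    farSup near p b (Fin.append W₁ W₂) ≤
      farSup near p₁ b₁ W₁ ^ θ₁ * farSup near p₂ b₂ W₂ ^ θ₂ := by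
  refine Real.iSup_le (fun τ => ?_) (mul_nonneg
    (rpow_nonneg (farSup_nonneg hb₁ W₁) θ₁) (rpow_nonneg (farSup_nonneg hb₂ W₂) θ₂))
  have hτ₁ : ∀ s, ¬ near τ.1 (W₁ s) := fun s => by
    simpa only [Fin.append_left] using τ.2 (Fin.castAdd A₂ s)
  have hτ₂ : ∀ s, ¬ near τ.1 (W₂ s) := fun s => by
    simpa only [Fin.append_right] using τ.2 (Fin.natAdd A₁ s)
  refine (hpt τ.1).trans (mul_le_mul ?_ ?_ (rpow_nonneg (rpow_nonneg (hb₂ τ.1) p₂) θ₂)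
    (rpow_nonneg (farSup_nonneg hb₁ W₁) θ₁))
  · exact rpow_le_rpow (rpow_nonneg (hb₁ τ.1) p₁) (rpow_le_farSup hτ₁) hθ₁
  · exact rpow_le_rpow (rpow_nonneg (hb₂ τ.1) p₂) (rpow_le_farSup hτ₂) hθ₂

theorem broadMass_add_le (hb : ∀ τ, 0 ≤ b τ) (hb₁ : ∀ τ, 0 ≤ b₁ τ) (hb₂ : ∀ τ, 0 ≤ b₂ τ)
    (hθ₁ : 0 ≤ θ₁) (hθ₂ : 0 ≤ θ₂) (hpt : ∀ τ, b τ ^ p ≤ (b₁ τ ^ p₁) ^ θ₁ * (b₂ τ ^ p₂) ^ θ₂)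
    (A₁ A₂ : ℕ) :
    broadMass near (A₁ + A₂) p b ≤
      broadMass near A₁ p₁ b₁ ^ θ₁ * broadMass near A₂ p₂ b₂ ^ θ₂ := by
  rcases isEmpty_or_nonempty (Fin (A₁ + A₂) → V) with hV | ⟨⟨Vs⟩⟩
  · rw [broadMass, Real.iInf_of_isEmpty]
    exact mul_nonneg (rpow_nonneg (broadMass_nonneg hb₁ A₁) θ₁)
      (rpow_nonneg (broadMass_nonneg hb₂ A₂) θ₂)
  have : Nonempty (Fin A₁ → V) := ⟨fun s => Vs (Fin.castAdd A₂ s)⟩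
  have : Nonempty (Fin A₂ → V) := ⟨fun s => Vs (Fin.natAdd A₁ s)⟩
  refine le_map_ciInf_ciInf (bddBelow_range_farSup hb₁ A₁) (bddBelow_range_farSup hb₂ A₂)
    (φ := fun x y => x ^ θ₁ * y ^ θ₂)
    (((continuous_rpow_const hθ₁).comp continuous_fst).mul
      ((continuous_rpow_const hθ₂).comp continuous_snd)) fun W₁ W₂ => ?_
  exact (broadMass_le_farSup hb _).trans (farSup_append_le hb₁ hb₂ hθ₁ hθ₂ hpt W₁ W₂)

end BroadMass

theorem broad_norm_holder_general {T V ι : Type} [Fintype T] (near : T → V → Prop)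
    (𝓑 : Finset ι) (N N₁ N₂ : ι → T → ℝ)
    (hN : ∀ B τ, 0 ≤ N B τ) (hN₁ : ∀ B τ, 0 ≤ N₁ B τ) (hN₂ : ∀ B τ, 0 ≤ N₂ B τ)
    (p p₁ p₂ α₁ α₂ : ℝ) (hp : 1 ≤ p) (hp₁ : 1 ≤ p₁) (hp₂ : 1 ≤ p₂)
    (hα₁ : 0 ≤ α₁) (hα₂ : 0 ≤ α₂)
    (hexp : 1 / p = α₁ / p₁ + α₂ / p₂)
    (hHolder : ∀ B τ, N B τ ≤ (N₁ B τ) ^ α₁ * (N₂ B τ) ^ α₂)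
    (A A₁ A₂ : ℕ) (hA : A = A₁ + A₂) :
    (∑ B ∈ 𝓑, broadMass near A p (N B)) ^ (1 / p) ≤
      ((∑ B ∈ 𝓑, broadMass near A₁ p₁ (N₁ B)) ^ (1 / p₁)) ^ α₁ *
      ((∑ B ∈ 𝓑, broadMass near A₂ p₂ (N₂ B)) ^ (1 / p₂)) ^ α₂ := by
  subst hA
  have hp₀ : 0 < p := by linarith
  have hp₁₀ : 0 < p₁ := by linarith
  have hp₂₀ : 0 < p₂ := by linarith
  have hθ : p * α₁ / p₁ + p * α₂ / p₂ = 1 := by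
    rw [mul_div_assoc, mul_div_assoc, ← mul_add, ← hexp, mul_one_div_cancel hp₀.ne']
  have hpt B τ : N B τ ^ p ≤ (N₁ B τ ^ p₁) ^ (p * α₁ / p₁) * (N₂ B τ ^ p₂) ^ (p * α₂ / p₂) :=
    rpow_le_rpow_mul_rpow_of_le (hN B τ) (hN₁ B τ) (hN₂ B τ) hp₀.le (hHolder B τ)
      (by field_simp) (by field_simp)
  have hsum := (Finset.sum_le_sum fun B _ => broadMass_add_le (near := near) (hN B) (hN₁ B)
      (hN₂ B) (by positivity) (by positivity) (hpt B) A₁ A₂).trans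
    (Finset.sum_rpow_mul_rpow_le 𝓑 (fun B _ => broadMass_nonneg (hN₁ B) A₁)
      (fun B _ => broadMass_nonneg (hN₂ B) A₂) (by positivity) (by positivity) hθ)
  exact rpow_le_rpow_mul_rpow_of_le (Finset.sum_nonneg fun B _ => broadMass_nonneg (hN B) _)
    (Finset.sum_nonneg fun B _ => broadMass_nonneg (hN₁ B) A₁)
    (Finset.sum_nonneg fun B _ => broadMass_nonneg (hN₂ B) A₂) (by positivity) hsum
    (by field_simp) (by field_simp)

/-- Hölder-type inequality for the broad norm: if `1 ≤ p, p₁, p₂ < ∞`,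
`α₁ + α₂ = 1` with `α₁, α₂ ∈ [0,1]`, `1/p = α₁/p₁ + α₂/p₂` and `A = A₁ + A₂`, then
`‖Ef‖_{HL^p_A(U)} ≤ ‖Ef‖_{HL^{p₁}_{A₁}(U)}^{α₁} ‖Ef‖_{HL^{p₂}_{A₂}(U)}^{α₂}`.
Here `N B τ`, `N₁ B τ`, `N₂ B τ` stand for the cap-wise norms `‖E f_τ‖_{L^p(B)}`,
`‖E f_τ‖_{L^{p₁}(B)}`, `‖E f_τ‖_{L^{p₂}(B)}`, which satisfy the per-ball Hölder
(log-convexity) bound `N B τ ≤ (N₁ B τ)^{α₁} (N₂ B τ)^{α₂}`. -/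
theorem broad_norm_holder {T V ι : Type} [Fintype T] (near : T → V → Prop)
    (𝓑 : Finset ι) (N N₁ N₂ : ι → T → ℝ)
    (hN : ∀ B τ, 0 ≤ N B τ) (hN₁ : ∀ B τ, 0 ≤ N₁ B τ) (hN₂ : ∀ B τ, 0 ≤ N₂ B τ)
    (p p₁ p₂ α₁ α₂ : ℝ) (hp : 1 ≤ p) (hp₁ : 1 ≤ p₁) (hp₂ : 1 ≤ p₂)
    (hα₁ : 0 ≤ α₁) (hα₂ : 0 ≤ α₂) (hαsum : α₁ + α₂ = 1)
    (hexp : 1 / p = α₁ / p₁ + α₂ / p₂)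
    (hHolder : ∀ B τ, N B τ ≤ (N₁ B τ) ^ α₁ * (N₂ B τ) ^ α₂)
    (A A₁ A₂ : ℕ) (hA : A = A₁ + A₂) :
    (∑ B ∈ 𝓑, broadMass near A p (N B)) ^ (1 / p) ≤
      ((∑ B ∈ 𝓑, broadMass near A₁ p₁ (N₁ B)) ^ (1 / p₁)) ^ α₁ *
      ((∑ B ∈ 𝓑, broadMass near A₂ p₂ (N₂ B)) ^ (1 / p₂)) ^ α₂ :=
  broad_norm_holder_general near 𝓑 N N₁ N₂ hN hN₁ hN₂ p p₁ p₂ α₁ α₂ hp hp₁ hp₂ hα₁ hα₂ hexp hHolder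
    A A₁ A₂ hA
end

section
/- A line intersects at most D+1 of the open cells cut out by a polynomial of degree D: if P : ℝⁿ → ℝ is a nonzero polynomial of total degree at most D and ℓ : ℝ → ℝⁿ is a line with P∘ℓ not identically zero, then the image of ℓ meets at most D+1 connected components of {x : P(x) ≠ 0}. -/
/-!
Restricted to the line, `P` becomes a univariate polynomial of degree at most `D`, so the line
leaves `{P ≠ 0}` only at a set `Z` of at most `D` parameters. Two parameters outside `Z` with the
same number of points of `Z` below them are joined by a segment avoiding `Z`, whose image is a
connected subset of `{P ≠ 0}`. Hence the cell containing `a + t • v` depends only on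
`#{z ∈ Z | z < t} ∈ {0, …, #Z}`.
-/

open Polynomial

open Finset in
theorem Finset.card_filter_lt_lt_of_lt_of_lt {α : Type*} [LinearOrder α] {Z : Finset α} {z t t' : α}
    (hz : z ∈ Z) (htz : t < z) (hzt' : z < t') : #{x ∈ Z | x < t} < #{x ∈ Z | x < t'} := by
  refine card_lt_card (ssubset_iff_of_subset ?_ |>.mpr ⟨z, ?_, ?_⟩)
  · exact monotone_filter_right _ fun x _ hx => hx.trans (htz.trans hzt')
  · simp [hz, hzt']
  · simp [htz.not_gt]

theorem Set.finite_and_ncard_image_le_of_mapsTo {α β γ : Type*} {f : α → β} {g : α → γ}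
    {s : Set α} {t : Set γ} (hgt : MapsTo g s t) (ht : t.Finite)
    (hfg : ∀ x ∈ s, ∀ y ∈ s, g x = g y → f x = f y) :
    (f '' s).Finite ∧ (f '' s).ncard ≤ t.ncard := by
  rcases s.eq_empty_or_nonempty with rfl | ⟨x₀, -⟩
  · simp
  have : Nonempty α := ⟨x₀⟩
  have hsub : f '' s ⊆ (fun c => f (Function.invFunOn g s c)) '' t := by
    rintro _ ⟨x, hx, rfl⟩
    have hgx := Function.invFunOn_pos (b := g x) ⟨x, hx, rfl⟩
    exact ⟨g x, hgt hx, hfg _ hgx.1 _ hx hgx.2⟩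
  exact ⟨(ht.image _).subset hsub, (ncard_le_ncard hsub (ht.image _)).trans (ncard_image_le ht)⟩

open Finset in
theorem Continuous.finite_and_ncard_image_connectedComponentIn_le {α X : Type*}
    [ConditionallyCompleteLinearOrder α] [DenselyOrdered α] [TopologicalSpace α] [OrderTopology α]
    [TopologicalSpace X] {f : α → X} (hf : Continuous f) {S : Set X} (Z : Finset α) (hZ : ∀ t, f t ∉ S → t ∈ Z) :
    ((fun t => connectedComponentIn S (f t)) '' (f ⁻¹' S)).Finite ∧
      ((fun t => connectedComponentIn S (f t)) '' (f ⁻¹' S)).ncard ≤ #Z + 1 := by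
  have hcomp : ∀ t ∈ f ⁻¹' S, ∀ t' ∈ f ⁻¹' S, t ≤ t' → #{x ∈ Z | x < t} = #{x ∈ Z | x < t'} →
      connectedComponentIn S (f t) = connectedComponentIn S (f t') := by
    intro t ht t' ht' htt' hcard
    have hIcc : f '' Set.Icc t t' ⊆ S := by
      rintro _ ⟨z, ⟨htz, hzt'⟩, rfl⟩
      rcases htz.eq_or_lt with rfl | htz
      · exact ht
      rcases hzt'.eq_or_lt with rfl | hzt'
      · exact ht'
      by_contra hz
      exact (card_filter_lt_lt_of_lt_of_lt (hZ z hz) htz hzt').ne hcard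
    exact connectedComponentIn_eq <|
      (isPreconnected_Icc.image f hf.continuousOn).subset_connectedComponentIn
        ⟨t, Set.left_mem_Icc.2 htt', rfl⟩ hIcc ⟨t', Set.right_mem_Icc.2 htt', rfl⟩
  have hmaps : Set.MapsTo (fun t => #{x ∈ Z | x < t}) (f ⁻¹' S) (range (#Z + 1)) :=
    fun t _ => mem_coe.2 <| mem_range.2 <| Nat.lt_succ_of_le <| card_filter_le _ _
  simpa using Set.finite_and_ncard_image_le_of_mapsTo hmaps (range (#Z + 1)).finite_toSet
    fun t ht t' ht' h => (le_total t t').elim (hcomp t ht t' ht' · h)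
      (hcomp t' ht' t ht · h.symm |>.symm)

namespace MvPolynomial

variable {σ R : Type*} [CommSemiring R]

theorem natDegree_aeval_le_mul_totalDegree (P : MvPolynomial σ R) {f : σ → R[X]} {k : ℕ}
    (hf : ∀ i, (f i).natDegree ≤ k) : (aeval f P).natDegree ≤ k * P.totalDegree := by
  conv_lhs => rw [P.as_sum, map_sum]
  refine natDegree_sum_le_of_forall_le _ _ fun d hd => ?_
  rw [aeval_monomial, Polynomial.algebraMap_eq]
  refine (natDegree_C_mul_le _ _).trans ?_
  calc (d.prod fun i e => f i ^ e).natDegree ≤ ∑ i ∈ d.support, k * d i :=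
        (natDegree_prod_le _ _).trans <| Finset.sum_le_sum fun i _ =>
          natDegree_pow_le.trans (by rw [mul_comm]; exact Nat.mul_le_mul_right _ (hf i))
    _ = k * d.degree := by rw [← Finset.mul_sum]; rfl
    _ ≤ k * P.totalDegree := Nat.mul_le_mul_left _ (le_totalDegree hd)

noncomputable def alongLine (P : MvPolynomial σ R) (a v : σ → R) : R[X] :=
  aeval (fun i => Polynomial.C (v i) * Polynomial.X + Polynomial.C (a i)) P

theorem eval_alongLine (P : MvPolynomial σ R) (a v : σ → R) (t : R) :
    (P.alongLine a v).eval t = eval (a + t • v) P := by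
  rw [alongLine, ← coe_evalRingHom, aeval_def, hom_eval₂]
  congr 1
  · ext; simp
  · ext i
    simp only [coe_evalRingHom, Polynomial.eval_add, Polynomial.eval_C,
      Polynomial.eval_mul, Polynomial.eval_X, Pi.add_apply, Pi.smul_apply, smul_eq_mul]
    ring

theorem natDegree_alongLine_le (P : MvPolynomial σ R) (a v : σ → R) :
    (P.alongLine a v).natDegree ≤ P.totalDegree :=
  (natDegree_aeval_le_mul_totalDegree P fun _ => Polynomial.natDegree_linear_le).trans_eq
    (one_mul _)

end MvPolynomial

theorem line_meets_at_most_D_add_one_cells_general (n D : ℕ)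
    (P : MvPolynomial (Fin n) ℝ) (hdeg : P.totalDegree ≤ D)
    (a v : Fin n → ℝ)
    (hline : ∃ t : ℝ, MvPolynomial.eval (a + t • v) P ≠ 0) :
    letI S : Set (Fin n → ℝ) := {x | MvPolynomial.eval x P ≠ 0}
    letI 𝒞 : Set (Set (Fin n → ℝ)) :=
      {C | ∃ t : ℝ, a + t • v ∈ S ∧ C = connectedComponentIn S (a + t • v)}
    𝒞.Finite ∧ 𝒞.ncard ≤ D + 1 := by
  set S : Set (Fin n → ℝ) := {x | MvPolynomial.eval x P ≠ 0}
  obtain ⟨Q, hQeval, hQdeg⟩ : ∃ Q : ℝ[X], (∀ t, Q.eval t = MvPolynomial.eval (a + t • v) P) ∧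
      Q.natDegree ≤ D :=
    ⟨_, P.eval_alongLine a v, (P.natDegree_alongLine_le a v).trans hdeg⟩
  have hQ : Q ≠ 0 := by
    obtain ⟨t, ht⟩ := hline
    exact fun h => ht (by rw [← hQeval, h, eval_zero])
  have hroots : ∀ t, a + t • v ∉ S → t ∈ Q.roots.toFinset := fun t ht => by
    simpa [mem_roots hQ, hQeval, S] using ht
  have hcard : Q.roots.toFinset.card ≤ D :=
    (Multiset.toFinset_card_le _).trans <| (card_roots' Q).trans hQdeg
  have h𝒞 : {C | ∃ t : ℝ, a + t • v ∈ S ∧ C = connectedComponentIn S (a + t • v)} =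
      (fun t : ℝ => connectedComponentIn S (a + t • v)) '' {t : ℝ | a + t • v ∈ S} := by
    ext C
    exact exists_congr fun t => and_congr_right fun _ => eq_comm
  obtain ⟨hfin, hle⟩ := (by fun_prop : Continuous fun t : ℝ => a + t • v)
    |>.finite_and_ncard_image_connectedComponentIn_le Q.roots.toFinset hroots
  exact h𝒞 ▸ ⟨hfin, hle.trans (Nat.add_le_add_right hcard 1)⟩

/-- A line meets at most `D + 1` of the open cells cut out by a nonzero polynomial of
degree at most `D`: if `P : ℝⁿ → ℝ` is a nonzero polynomial with total degree `≤ D` and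
`ℓ(t) = a + t • v` is a line (with `v ≠ 0`) on which `P` does not vanish identically,
then the image of `ℓ` meets at most `D + 1` connected components of `{x | P x ≠ 0}`. -/
theorem line_meets_at_most_D_add_one_cells (n D : ℕ)
    (P : MvPolynomial (Fin n) ℝ) (hP : P ≠ 0) (hdeg : P.totalDegree ≤ D)
    (a v : Fin n → ℝ) (hv : v ≠ 0)
    (hline : ∃ t : ℝ, MvPolynomial.eval (a + t • v) P ≠ 0) :
    letI S : Set (Fin n → ℝ) := {x | MvPolynomial.eval x P ≠ 0}
    letI 𝒞 : Set (Set (Fin n → ℝ)) :=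
      {C | ∃ t : ℝ, a + t • v ∈ S ∧ C = connectedComponentIn S (a + t • v)}
    𝒞.Finite ∧ 𝒞.ncard ≤ D + 1 :=
  line_meets_at_most_D_add_one_cells_general n D P hdeg a v hline
end
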